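/- Inversion formula for the Bruggeman transform. Let ν ∈ ℂ and f ∈ F_η, define ψ(z) := f(z) - z^{-2ν-1} η(S) f(-1/z) for z ∈ ℂ∖ℝ, and assume ψ extends holomorphically to ℂ∖(-∞,0]. Then, with all powers taken with the principal branch: ψ(z) + z^{-2ν-1} η(S) ψ(-1/z) = (1 + e^{-2πiν}) f(z) for every z with Im z > 0, and ψ(z) + z^{-2ν-1} η(S) ψ(-1/z) = (1 + e^{2πiν}) f(z) for every z with Im z < 0. In particular, if ν ∈ ½+ℤ then ψ(z) + z^{-2ν-1} η(S) ψ(-1/z) = 0 identically on ℂ∖ℝ, while if ν ∉ ½+ℤ then f is recovered from ψ by f(z) = (1+e^{∓2πiν})^{-1}(ψ(z) + z^{-2ν-1} η(S) ψ(-1/z)) for z in the upper (resp. lower) half-plane. -/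

import Mathlib

open Complex Filter Topology MeasureTheory Set

noncomputable section

abbrev SL2Z := Matrix.SpecialLinearGroup (Fin 2) ℤ

def Smat : SL2Z := ⟨!![0, 1; -1, 0], by decide⟩
def Tmat : SL2Z := ⟨!![1, 1; 0, 1], by decide⟩
def negI : SL2Z := ⟨!![-1, 0; 0, -1], by decide⟩

variable {V : Type} [NormedAddCommGroup V] [NormedSpace ℂ V]

/-- The space `F_η`. -/
structure MemFeta (η : SL2Z →* (V →ₗ[ℂ] V)ˣ) (f : ℂ → V) : Prop where
  holo : DifferentiableOn ℂ f {z : ℂ | z.im ≠ 0}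
  periodic : ∀ z : ℂ, z.im ≠ 0 → f (z + 1) = (η Tmat : V →ₗ[ℂ] V) (f z)
  bounded : ∃ C : ℝ, ∀ z : ℂ, 1 ≤ |z.im| → ‖f z‖ ≤ C
  limits : ∃ a b : V, Tendsto (fun t : ℝ => f ((t : ℂ) * I)) atTop (𝓝 a) ∧
    Tendsto (fun t : ℝ => f (-((t : ℂ) * I))) atTop (𝓝 b) ∧ a + b = 0

/-- `ψ(z) + z^{-2ν-1} η(S) ψ(-1/z)`. -/
def lewisCombo (ν : ℂ) (η : SL2Z →* (V →ₗ[ℂ] V)ˣ) (ψ : ℂ → V) : ℂ → V :=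
  fun z => ψ z + (z ^ (-2 * ν - 1)) • (η Smat : V →ₗ[ℂ] V) (ψ (-z⁻¹))

/-!
`ψ(-1/z)` is again `f(-1/z) - (-1/z)^{-2ν-1} η(S) f(z)`, and `η(S)² = η(-I) = 1`, so the
`f(-1/z)` terms cancel and `ψ(z) + z^{-2ν-1} η(S) ψ(-1/z) = (1 - z^{-2ν-1} (-1/z)^{-2ν-1}) f(z)`.
The principal branches give `Log z + Log(-1/z) = ±πi` on `ℍ^±`, so the factor is
`1 + e^{∓2πiν}`, which vanishes exactly when `ν ∈ ½+ℤ`.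
-/

lemma Smat_mul_Smat : Smat * Smat = negI := by
  ext i j
  fin_cases i <;> fin_cases j <;> rfl

lemma involutive_map_Smat {η : SL2Z →* (V →ₗ[ℂ] V)ˣ} (hη : η negI = 1) :
    Function.Involutive (η Smat : V →ₗ[ℂ] V) := by
  intro v
  have h : η Smat * η Smat = 1 := by rw [← map_mul, Smat_mul_Smat, hη]
  exact LinearMap.congr_fun (Units.ext_iff.mp h) v

lemma add_cpow_smul_neg_inv_eq {a : ℂ} {A : V →ₗ[ℂ] V} (hA : Function.Involutive A)
    {f ψ : ℂ → V} (hψ : ∀ z : ℂ, z.im ≠ 0 → ψ z = f z - z ^ a • A (f (-z⁻¹)))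
    {z : ℂ} (hz : z.im ≠ 0) :
    ψ z + z ^ a • A (ψ (-z⁻¹)) = (1 - z ^ a * (-z⁻¹) ^ a) • f z := by
  have hz0 : z ≠ 0 := fun h => hz (by simp [h])
  have him : (-z⁻¹).im ≠ 0 := by simpa [Complex.inv_im, hz0] using hz
  rw [hψ z hz, hψ (-z⁻¹) him, inv_neg, neg_neg, inv_inv, map_sub, map_smul, hA]
  module

namespace Complex

lemma log_neg_of_im_neg {w : ℂ} (hw : w.im < 0) : log (-w) = log w + Real.pi * I := by
  apply Complex.ext <;> simp [log_re, log_im, arg_neg_eq_arg_add_pi_of_im_neg hw]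

lemma log_add_log_neg_inv_of_im_pos {z : ℂ} (hz : 0 < z.im) :
    log z + log (-z⁻¹) = Real.pi * I := by
  have hz0 : z ≠ 0 := fun h => by simp [h] at hz
  have hinv : (z⁻¹).im < 0 := by
    rw [inv_im]
    exact div_neg_of_neg_of_pos (neg_lt_zero.mpr hz) (normSq_pos.mpr hz0)
  have harg : z.arg ≠ Real.pi := fun h => hz.ne' (arg_eq_pi_iff.mp h).2
  rw [log_neg_of_im_neg hinv, log_inv z harg]
  ring

lemma log_add_log_neg_inv_of_im_neg {z : ℂ} (hz : z.im < 0) :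
    log z + log (-z⁻¹) = -(Real.pi * I) := by
  have hz0 : z ≠ 0 := fun h => by simp [h] at hz
  have hinv : (-z⁻¹).im < 0 := by
    rw [neg_im, inv_im, neg_div, neg_neg]
    exact div_neg_of_neg_of_pos hz (normSq_pos.mpr hz0)
  have harg : z.arg ≠ Real.pi := fun h => hz.ne (arg_eq_pi_iff.mp h).2
  have h := log_neg_of_im_neg hinv
  rw [neg_neg, log_inv z harg] at h
  linear_combination -h

lemma cpow_mul_neg_inv_cpow {z : ℂ} (hz : z ≠ 0) (a : ℂ) :
    z ^ a * (-z⁻¹) ^ a = exp ((log z + log (-z⁻¹)) * a) := by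
  rw [cpow_def_of_ne_zero hz, cpow_def_of_ne_zero (by simpa using hz), ← exp_add, add_mul]

lemma one_add_exp_two_pi_mul_I_mul_eq_zero_iff {w : ℂ} :
    1 + exp (2 * Real.pi * I * w) = 0 ↔ ∃ n : ℤ, w = 1 / 2 + n := by
  have hπI : (2 * Real.pi * I : ℂ) ≠ 0 := by simp [Real.pi_ne_zero]
  have hsplit : 2 * Real.pi * I * w = 2 * Real.pi * I * (w - 1 / 2) + Real.pi * I := by ring
  rw [add_eq_zero_iff_eq_neg', hsplit, exp_add, exp_pi_mul_I, mul_neg_one, neg_inj,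
    exp_eq_one_iff]
  refine exists_congr fun n => ?_
  rw [mul_comm (n : ℂ), mul_right_inj' hπI, sub_eq_iff_eq_add']

end Complex

lemma exists_half_add_int_neg_iff {ν : ℂ} :
    (∃ n : ℤ, -ν = 1 / 2 + n) ↔ ∃ n : ℤ, ν = 1 / 2 + n := by
  constructor <;> rintro ⟨n, hn⟩ <;> exact ⟨-n - 1, by push_cast; linear_combination -hn⟩

section LewisCombo

variable {η : SL2Z →* (V →ₗ[ℂ] V)ˣ} {ν : ℂ} {f ψ : ℂ → V}

lemma lewisCombo_of_im_pos (hη : η negI = 1)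
    (hψ : ∀ z : ℂ, z.im ≠ 0 → ψ z = f z - (z ^ (-2 * ν - 1)) • (η Smat : V →ₗ[ℂ] V) (f (-z⁻¹)))
    {z : ℂ} (hz : 0 < z.im) :
    lewisCombo ν η ψ z = (1 + exp (-(2 * Real.pi * I * ν))) • f z := by
  have hz0 : z ≠ 0 := fun h => by simp [h] at hz
  rw [lewisCombo, add_cpow_smul_neg_inv_eq (involutive_map_Smat hη) hψ hz.ne',
    cpow_mul_neg_inv_cpow hz0, log_add_log_neg_inv_of_im_pos hz,
    show Real.pi * I * (-2 * ν - 1) = -(2 * Real.pi * I * ν) + -(Real.pi * I) by ring,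
    exp_add, exp_neg (Real.pi * I), exp_pi_mul_I]
  congr 1
  ring

lemma lewisCombo_of_im_neg (hη : η negI = 1)
    (hψ : ∀ z : ℂ, z.im ≠ 0 → ψ z = f z - (z ^ (-2 * ν - 1)) • (η Smat : V →ₗ[ℂ] V) (f (-z⁻¹)))
    {z : ℂ} (hz : z.im < 0) :
    lewisCombo ν η ψ z = (1 + exp (2 * Real.pi * I * ν)) • f z := by
  have hz0 : z ≠ 0 := fun h => by simp [h] at hz
  rw [lewisCombo, add_cpow_smul_neg_inv_eq (involutive_map_Smat hη) hψ hz.ne,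
    cpow_mul_neg_inv_cpow hz0, log_add_log_neg_inv_of_im_neg hz,
    show -(Real.pi * I) * (-2 * ν - 1) = 2 * Real.pi * I * ν + Real.pi * I by ring,
    exp_add, exp_pi_mul_I]
  congr 1
  ring

end LewisCombo

theorem bruggeman_inversion (η : SL2Z →* (V →ₗ[ℂ] V)ˣ) (hη1 : η negI = 1)
    (ν : ℂ) (f : ℂ → V)
    (ψ : ℂ → V)
    (hψeq : ∀ z : ℂ, z.im ≠ 0 →
      ψ z = f z - (z ^ (-2 * ν - 1)) • (η Smat : V →ₗ[ℂ] V) (f (-z⁻¹))) :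
    (∀ z : ℂ, 0 < z.im →
        lewisCombo ν η ψ z = (1 + Complex.exp (-(2 * Real.pi * I * ν))) • f z) ∧
    (∀ z : ℂ, z.im < 0 →
        lewisCombo ν η ψ z = (1 + Complex.exp (2 * Real.pi * I * ν)) • f z) ∧
    ((∃ n : ℤ, ν = 1 / 2 + n) → ∀ z : ℂ, z.im ≠ 0 → lewisCombo ν η ψ z = 0) ∧
    ((∀ n : ℤ, ν ≠ 1 / 2 + n) →
      (∀ z : ℂ, 0 < z.im →
        f z = (1 + Complex.exp (-(2 * Real.pi * I * ν)))⁻¹ • lewisCombo ν η ψ z) ∧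
      (∀ z : ℂ, z.im < 0 →
        f z = (1 + Complex.exp (2 * Real.pi * I * ν))⁻¹ • lewisCombo ν η ψ z)) := by
  have hpos := fun (z : ℂ) (hz : 0 < z.im) => lewisCombo_of_im_pos hη1 hψeq hz
  have hneg := fun (z : ℂ) (hz : z.im < 0) => lewisCombo_of_im_neg hη1 hψeq hz
  have hplus : 1 + exp (2 * Real.pi * I * ν) = 0 ↔ ∃ n : ℤ, ν = 1 / 2 + n :=
    one_add_exp_two_pi_mul_I_mul_eq_zero_iff
  have hminus : 1 + exp (-(2 * Real.pi * I * ν)) = 0 ↔ ∃ n : ℤ, ν = 1 / 2 + n := by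
    rw [← mul_neg, one_add_exp_two_pi_mul_I_mul_eq_zero_iff, exists_half_add_int_neg_iff]
  refine ⟨hpos, hneg, fun hν z hz => ?_, fun hν => ⟨fun z hz => ?_, fun z hz => ?_⟩⟩
  · rcases hz.lt_or_gt with h | h
    · rw [hneg z h, hplus.mpr hν, zero_smul]
    · rw [hpos z h, hminus.mpr hν, zero_smul]
  · rw [hpos z hz, inv_smul_smul₀ (mt hminus.mp (not_exists.mpr hν))]
  · rw [hneg z hz, inv_smul_smul₀ (mt hplus.mp (not_exists.mpr hν))]

end
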